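/- For every finite simple graph G on n vertices and all positive integers d and m with m ≤ n, the d-improper chromatic number satisfies χ^d(G) ≥ 1 + (−dm + Σ_{i=1}^m λ_i)/(dm − Σ_{i=1}^m λ_{n+1−i}). -/

import Mathlib

open SimpleGraph Finset Matrix

namespace ImproperPaper

variable {V W : Type*}

/-- The strong product of two simple graphs. -/
def strongProd (G : SimpleGraph V) (H : SimpleGraph W) : SimpleGraph (V × W) where
  Adj p q := (p.1 = q.1 ∧ H.Adj p.2 q.2) ∨ (G.Adj p.1 q.1 ∧ p.2 = q.2) ∨
    (G.Adj p.1 q.1 ∧ H.Adj p.2 q.2)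
  symm := by
    refine ⟨?_⟩
    rintro ⟨a, b⟩ ⟨x, y⟩ (⟨h1, h2⟩ | ⟨h1, h2⟩ | ⟨h1, h2⟩)
    · exact Or.inl ⟨h1.symm, h2.symm⟩
    · exact Or.inr (Or.inl ⟨h1.symm, h2.symm⟩)
    · exact Or.inr (Or.inr ⟨h1.symm, h2.symm⟩)
  loopless := by
    refine ⟨?_⟩
    rintro ⟨a, b⟩ (⟨h1, h2⟩ | ⟨h1, h2⟩ | ⟨h1, h2⟩)
    · exact H.irrefl h2
    · exact G.irrefl h1
    · exact G.irrefl h1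

/-- The lexicographical product of two simple graphs. -/
def lexProd (G : SimpleGraph V) (H : SimpleGraph W) : SimpleGraph (V × W) where
  Adj p q := G.Adj p.1 q.1 ∨ (p.1 = q.1 ∧ H.Adj p.2 q.2)
  symm := by
    refine ⟨?_⟩
    rintro ⟨a, b⟩ ⟨x, y⟩ (h | ⟨h1, h2⟩)
    · exact Or.inl h.symm
    · exact Or.inr ⟨h1.symm, h2.symm⟩
  loopless := by
    refine ⟨?_⟩
    rintro ⟨a, b⟩ (h | ⟨h1, h2⟩)
    · exact G.irrefl h
    · exact H.irrefl h2

instance {G : SimpleGraph V} {H : SimpleGraph W} [DecidableEq V] [DecidableEq W]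
    [DecidableRel G.Adj] [DecidableRel H.Adj] : DecidableRel (strongProd G H).Adj := fun p q =>
  show Decidable ((p.1 = q.1 ∧ H.Adj p.2 q.2) ∨ (G.Adj p.1 q.1 ∧ p.2 = q.2) ∨
    (G.Adj p.1 q.1 ∧ H.Adj p.2 q.2)) from inferInstance

/-- A colouring is `d`-improper if every colour class induces a subgraph of
maximum degree at most `d`. -/
def IsImproperColoring (G : SimpleGraph V) (d : ℕ) {α : Type*} (c : V → α) : Prop :=
  ∀ v : V, ({w | G.Adj v w ∧ c w = c v} : Set V).ncard ≤ d

/-- The `d`-improper chromatic number. -/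
noncomputable def improperChromaticNumber (G : SimpleGraph V) (d : ℕ) : ℕ :=
  sInf {n | ∃ c : V → Fin n, IsImproperColoring G d c}

/-- A colouring is `t`-clustered if every monochromatic connected component has at
most `t` vertices. -/
def IsClusteredColoring (G : SimpleGraph V) (t : ℕ) {α : Type*} (c : V → α) : Prop :=
  ∀ v : V,
    ({w | Relation.ReflTransGen (fun a b => G.Adj a b ∧ c a = c b) v w} : Set V).ncard ≤ t

/-- The `t`-clustered chromatic number. -/
noncomputable def clusteredChromaticNumber (G : SimpleGraph V) (t : ℕ) : ℕ :=
  sInf {n | ∃ c : V → Fin n, IsClusteredColoring G t c}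

/-- The chromatic number: least `n` admitting a proper colouring with `n` colours. -/
noncomputable def chromNum (G : SimpleGraph V) : ℕ :=
  sInf {n | ∃ c : V → Fin n, ∀ u v, G.Adj u v → c u ≠ c v}

/-- The `b`-fold `d`-improper chromatic number: least number of colours in an assignment
of `b` colours to each vertex such that, for every colour `x`, the set of vertices whose
colour set contains `x` induces a subgraph of maximum degree at most `d`. -/
noncomputable def bFoldImproperChromaticNumber (G : SimpleGraph V) (b d : ℕ) : ℕ :=
  sInf {n | ∃ c : V → Finset (Fin n), (∀ v, (c v).card = b) ∧
    ∀ v : V, ∀ x ∈ c v, ({w | G.Adj v w ∧ x ∈ c w} : Set V).ncard ≤ d}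

/-- The (proper) `b`-fold chromatic number. -/
noncomputable def bFoldChromaticNumber (G : SimpleGraph V) (b : ℕ) : ℕ :=
  bFoldImproperChromaticNumber G b 0

/-- The `b`-fold `t`-clustered chromatic number. -/
noncomputable def bFoldClusteredChromaticNumber (G : SimpleGraph V) (b t : ℕ) : ℕ :=
  sInf {n | ∃ c : V → Finset (Fin n), (∀ v, (c v).card = b) ∧
    ∀ x : Fin n, ∀ v : V, x ∈ c v →
      ({w | Relation.ReflTransGen (fun a b' => G.Adj a b' ∧ x ∈ c a ∧ x ∈ c b') v w} :
        Set V).ncard ≤ t}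

/-- The fractional chromatic number `χ_f(G) = inf { χ_b(G)/b : b ≥ 1 }`. -/
noncomputable def fracChromaticNumber (G : SimpleGraph V) : ℝ :=
  sInf {x : ℝ | ∃ b : ℕ, 0 < b ∧ x = (bFoldChromaticNumber G b : ℝ) / b}

/-- The fractional `d`-improper chromatic number. -/
noncomputable def fracImproperChromaticNumber (G : SimpleGraph V) (d : ℕ) : ℝ :=
  sInf {x : ℝ | ∃ b : ℕ, 0 < b ∧ x = (bFoldImproperChromaticNumber G b d : ℝ) / b}

/-- The fractional `t`-clustered chromatic number. -/
noncomputable def fracClusteredChromaticNumber (G : SimpleGraph V) (t : ℕ) : ℝ :=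
  sInf {x : ℝ | ∃ b : ℕ, 0 < b ∧ x = (bFoldClusteredChromaticNumber G b t : ℝ) / b}

/-- `lam` lists the eigenvalues of the Hermitian matrix `A` (with multiplicity) in
non-increasing order. -/
def IsEigList {n : ℕ} {A : Matrix (Fin n) (Fin n) ℝ} (hA : A.IsHermitian)
    (lam : Fin n → ℝ) : Prop :=
  Antitone lam ∧ ∃ σ : Equiv.Perm (Fin n), lam = hA.eigenvalues ∘ σ

/-- The largest size of a vertex subset inducing a subgraph of maximum degree at most `d`. -/
noncomputable def maxImproperIndep (G : SimpleGraph V) (d : ℕ) : ℕ :=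
  sSup {k | ∃ s : Set V, s.ncard = k ∧ ∀ v ∈ s, ({w | w ∈ s ∧ G.Adj v w} : Set V).ncard ≤ d}

end ImproperPaper

/-!
Let `c` be a `d`-improper colouring with `k` colours, viewed as a map into the group `Fin k`, and
twist vectors by the characters `ψ` of `Fin k`, `x ↦ (ψ ∘ c) * x`. By orthogonality of characters,
the quadratic forms of `A` at the `k` twists of `x` add up to `k` times the quadratic form at `x`
of the pinching of `A` along the colour classes, i.e. of the adjacency matrix of the monochromatic
subgraph; as all its degrees are at most `d`, the latter is at most `d ‖x‖²`. Now let `x` run over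
`m` orthonormal eigenvectors for `λ₁, …, λₘ`. The trivial twist contributes `∑ λᵢ`, and each of the
other `k - 1` twisted families is still orthonormal, so contributes at least `∑ λₙ₊₁₋ᵢ` by Ky Fan's
principle. Hence `∑ λᵢ + (k - 1) ∑ λₙ₊₁₋ᵢ ≤ k d m`, which rearranges to the bound because
`∑ λₙ₊₁₋ᵢ ≤ 0` (Ky Fan again, against `m` standard basis vectors, on which `A` has zero diagonal).
-/

open RCLike WithLp

theorem sum_le_sum_mul_of_le_of_le {ι : Type*} [Fintype ι] {S : Finset ι} {μ w : ι → ℝ} {t : ℝ}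
    (hS : ∀ j ∈ S, μ j ≤ t) (hSc : ∀ j ∉ S, t ≤ μ j) (hw₀ : ∀ j, 0 ≤ w j) (hw₁ : ∀ j, w j ≤ 1)
    (hw : ∑ j, w j = #S) : ∑ j ∈ S, μ j ≤ ∑ j, μ j * w j := by
  classical
  have key : ∑ j, (μ j - t) * ((if j ∈ S then 1 else 0) - w j) ≤ 0 := by
    refine sum_nonpos fun j _ => ?_
    split_ifs with hj
    · exact mul_nonpos_of_nonpos_of_nonneg (by linarith [hS j hj]) (by linarith [hw₁ j])
    · exact mul_nonpos_of_nonneg_of_nonpos (by linarith [hSc j hj]) (by linarith [hw₀ j])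
  simp only [mul_sub, sub_mul, mul_ite, mul_one, mul_zero, sum_sub_distrib, ← sum_filter,
    filter_mem_eq_inter, univ_inter, ← mul_sum, hw, sum_const, nsmul_eq_mul] at key
  linarith

namespace LinearMap.IsSymmetric

variable {𝕜 E ι κ : Type*} [RCLike 𝕜] [NormedAddCommGroup E] [InnerProductSpace 𝕜 E]
  [Fintype ι] [Fintype κ] {T : E →ₗ[𝕜] E} {b : OrthonormalBasis ι 𝕜 E} {μ : ι → ℝ}

theorem re_inner_map_self_eq_sum (hT : T.IsSymmetric) (hb : ∀ j, T (b j) = (μ j : 𝕜) • b j)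
    (x : E) : re (inner 𝕜 x (T x)) = ∑ j, μ j * ‖inner 𝕜 (b j) x‖ ^ 2 := by
  have hcoord (j : ι) : inner 𝕜 (b j) (T x) = μ j * inner 𝕜 (b j) x := by
    rw [← hT, hb, inner_smul_left, conj_ofReal]
  rw [← b.sum_inner_mul_inner, map_sum]
  refine sum_congr rfl fun j _ => ?_
  rw [hcoord, ← inner_conj_symm x (b j), mul_left_comm, RCLike.conj_mul, ← ofReal_pow,
    ← ofReal_mul, ofReal_re]

/-- Ky Fan's principle. The weights `∑ i, ‖⟪b j, x i⟫‖²` lie in `[0, 1]` by Bessel's inequality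
and add up to `card κ` by Parseval's identity. -/
theorem sum_le_sum_re_inner_map_self (hT : T.IsSymmetric) (hb : ∀ j, T (b j) = (μ j : 𝕜) • b j)
    {x : κ → E} (hx : Orthonormal 𝕜 x) {S : Finset ι} (hS : #S = Fintype.card κ) {t : ℝ}
    (hSt : ∀ j ∈ S, μ j ≤ t) (htS : ∀ j ∉ S, t ≤ μ j) :
    ∑ j ∈ S, μ j ≤ ∑ i, re (inner 𝕜 (x i) (T (x i))) := by
  simp_rw [hT.re_inner_map_self_eq_sum hb, sum_comm (γ := κ), ← mul_sum]
  refine sum_le_sum_mul_of_le_of_le hSt htS (fun j => by positivity) (fun j => ?_) ?_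
  · simpa [norm_inner_symm, b.orthonormal.1 j] using hx.sum_inner_products_le (b j) (s := univ)
  · rw [sum_comm]
    simp [b.sum_sq_norm_inner_right, hx.1, hS]

end LinearMap.IsSymmetric

namespace Matrix

variable {𝕜 V α : Type*} [RCLike 𝕜]

def pinching {R : Type*} [Zero R] [DecidableEq α] (c : V → α) (M : Matrix V V R) :
    Matrix V V R :=
  of fun v w => if c v = c w then M v w else 0

theorem isHermitian_pinching [DecidableEq α] {M : Matrix V V 𝕜} (hM : M.IsHermitian)
    (c : V → α) : (pinching c M).IsHermitian := by
  ext v w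
  simp only [conjTranspose_apply, pinching, of_apply, eq_comm (a := c v)]
  split_ifs <;> simp [hM.apply]

variable [Fintype V]

theorem re_star_dotProduct_mulVec_le {M : Matrix V V 𝕜} {d : ℝ}
    (hrow : ∀ v, ∑ w, ‖M v w‖ ≤ d) (hcol : ∀ w, ∑ v, ‖M v w‖ ≤ d) (x : V → 𝕜) :
    re (star x ⬝ᵥ (M *ᵥ x)) ≤ d * ∑ v, ‖x v‖ ^ 2 := by
  have hterm (v w : V) :
      re (star (x v) * (M v w * x w)) ≤ ‖M v w‖ * (‖x v‖ ^ 2 + ‖x w‖ ^ 2) / 2 := by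
    calc re (star (x v) * (M v w * x w)) ≤ ‖star (x v) * (M v w * x w)‖ := re_le_norm _
      _ = ‖M v w‖ * (‖x v‖ * ‖x w‖) := by rw [norm_mul, norm_mul, norm_star]; ring
      _ ≤ ‖M v w‖ * (‖x v‖ ^ 2 + ‖x w‖ ^ 2) / 2 := by
        rw [mul_div_assoc]
        gcongr
        nlinarith [sq_nonneg (‖x v‖ - ‖x w‖)]
  calc re (star x ⬝ᵥ (M *ᵥ x)) = ∑ v, ∑ w, re (star (x v) * (M v w * x w)) := by
        simp [dotProduct, mulVec, mul_sum]
    _ ≤ ∑ v, ∑ w, ‖M v w‖ * (‖x v‖ ^ 2 + ‖x w‖ ^ 2) / 2 := by gcongr with v _ w _; exact hterm v w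
    _ = (∑ v, (∑ w, ‖M v w‖) * ‖x v‖ ^ 2 + ∑ w, (∑ v, ‖M v w‖) * ‖x w‖ ^ 2) / 2 := by
        simp only [mul_add, add_div, sum_add_distrib, sum_mul, sum_div]
        rw [sum_comm (f := fun v w => ‖M v w‖ * ‖x w‖ ^ 2 / 2)]
    _ ≤ (∑ v, d * ‖x v‖ ^ 2 + ∑ w, d * ‖x w‖ ^ 2) / 2 := by
        gcongr with v _ w _
        · exact hrow v
        · exact hcol w
    _ = d * ∑ v, ‖x v‖ ^ 2 := by rw [← mul_sum]; ring

theorem sum_addChar_star_dotProduct_mulVec [AddCommGroup α] [Fintype α] [DecidableEq α]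
    (c : V → α) (M : Matrix V V ℂ) (x : V → ℂ) :
    ∑ ψ : AddChar α ℂ, star ((ψ ∘ c) * x) ⬝ᵥ (M *ᵥ ((ψ ∘ c) * x)) =
      Fintype.card α * (star x ⬝ᵥ (pinching c M *ᵥ x)) := by
  have hchar (v w : V) : ∑ ψ : AddChar α ℂ, star (ψ (c v)) * ψ (c w) =
      if c v = c w then (Fintype.card α : ℂ) else 0 := by
    simp_rw [Complex.star_def, ← AddChar.map_neg_eq_conj, ← AddChar.map_add_eq_mul,
      AddChar.sum_apply_eq_ite, neg_add_eq_zero]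
  calc ∑ ψ : AddChar α ℂ, star ((ψ ∘ c) * x) ⬝ᵥ (M *ᵥ ((ψ ∘ c) * x))
      = ∑ v, ∑ w, star (x v) * M v w * x w * ∑ ψ : AddChar α ℂ, star (ψ (c v)) * ψ (c w) := by
        simp only [dotProduct, mulVec, mul_sum]
        rw [sum_comm]
        refine sum_congr rfl fun v _ => ?_
        rw [sum_comm]
        refine sum_congr rfl fun w _ => sum_congr rfl fun ψ _ => ?_
        simp only [Pi.star_apply, Pi.mul_apply, Function.comp_apply, star_mul']
        ring
    _ = Fintype.card α * (star x ⬝ᵥ (pinching c M *ᵥ x)) := by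
        simp only [hchar, dotProduct, mulVec, pinching, of_apply, mul_sum]
        refine sum_congr rfl fun v _ => sum_congr rfl fun w _ => ?_
        split_ifs <;> simp only [Pi.star_apply] <;> ring

theorem orthonormal_toLp_mul {κ : Type*} {x : κ → EuclideanSpace 𝕜 V} (hx : Orthonormal 𝕜 x)
    {u : V → 𝕜} (hu : ∀ v, ‖u v‖ = 1) : Orthonormal 𝕜 fun i => toLp 2 (u * ofLp (x i)) := by
  classical
  rw [orthonormal_iff_ite] at hx ⊢
  intro i j
  rw [← hx i j, EuclideanSpace.inner_toLp_toLp, EuclideanSpace.inner_eq_star_dotProduct]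
  refine sum_congr rfl fun v _ => ?_
  simp only [Pi.mul_apply, Pi.star_apply, star_mul']
  rw [mul_mul_mul_comm, star_def, RCLike.mul_conj, hu]
  simp

variable [DecidableEq V]

theorem inner_toEuclideanLin (M : Matrix V V 𝕜) (x y : EuclideanSpace 𝕜 V) :
    inner 𝕜 x (toEuclideanLin M y) = star (ofLp x) ⬝ᵥ (M *ᵥ ofLp y) :=
  dotProduct_comm _ _

namespace IsHermitian

/-- Both eigenvalue lists are the sorted roots of the same characteristic polynomial. -/
theorem eigenvalues_eq_of_map_eq {A : Matrix V V ℝ} (hA : A.IsHermitian)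
    {A' : Matrix V V 𝕜} (hA' : A'.IsHermitian) (h : A.map (algebraMap ℝ 𝕜) = A') :
    hA'.eigenvalues = hA.eigenvalues := by
  subst h
  suffices hA'.eigenvalues₀ = hA.eigenvalues₀ by unfold IsHermitian.eigenvalues; rw [this]
  rw [← List.ofFn_inj, ← hA.sort_roots_charpoly_eq_eigenvalues₀,
    ← hA'.sort_roots_charpoly_eq_eigenvalues₀, charpoly_map,
    hA.splits_charpoly.roots_map, Multiset.map_map]
  simp

variable {M : Matrix V V 𝕜} (hM : M.IsHermitian)

theorem toEuclideanLin_eigenvectorBasis (j : V) :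
    toEuclideanLin M (hM.eigenvectorBasis j) = (hM.eigenvalues j : 𝕜) • hM.eigenvectorBasis j := by
  rw [toLpLin_apply, hM.mulVec_eigenvectorBasis, RCLike.real_smul_eq_coe_smul (K := 𝕜)]
  rfl

theorem sum_eigenvalues_le_sum_re_diag {S : Finset V} {t : ℝ}
    (hSt : ∀ j ∈ S, hM.eigenvalues j ≤ t) (htS : ∀ j ∉ S, t ≤ hM.eigenvalues j) :
    ∑ j ∈ S, hM.eigenvalues j ≤ ∑ j ∈ S, re (M j j) := by
  have hx : Orthonormal 𝕜 fun j : S => EuclideanSpace.basisFun V 𝕜 j :=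
    (EuclideanSpace.basisFun V 𝕜).orthonormal.comp _ Subtype.val_injective
  convert LinearMap.IsSymmetric.sum_le_sum_re_inner_map_self
    (isSymmetric_toEuclideanLin_iff.mpr hM) hM.toEuclideanLin_eigenvectorBasis hx
    (Fintype.card_coe S).symm hSt htS using 1
  rw [← sum_coe_sort S]
  refine sum_congr rfl fun j _ => ?_
  simp [inner_toEuclideanLin]

end IsHermitian

theorem IsHermitian.sum_add_mul_sum_le_of_pinching [AddCommGroup α] [Fintype α] [DecidableEq α]
    {M : Matrix V V ℂ} (hM : M.IsHermitian) (c : V → α) {d : ℝ}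
    (hrow : ∀ v, ∑ w, ‖pinching c M v w‖ ≤ d) {T S : Finset V} (hTS : #T = #S) {t : ℝ}
    (hSt : ∀ j ∈ S, hM.eigenvalues j ≤ t) (htS : ∀ j ∉ S, t ≤ hM.eigenvalues j) :
    ∑ j ∈ T, hM.eigenvalues j + (Fintype.card α - 1) * ∑ j ∈ S, hM.eigenvalues j ≤
      Fintype.card α * (#T * d) := by
  have hcol (w : V) : ∑ v, ‖pinching c M v w‖ ≤ d := by
    simpa [← (isHermitian_pinching hM c).apply w] using hrow w
  have hb := hM.toEuclideanLin_eigenvectorBasis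
  set b := hM.eigenvectorBasis
  set μ := hM.eigenvalues
  have hx : Orthonormal ℂ fun j : T => b j := b.orthonormal.comp _ Subtype.val_injective
  let y (ψ : AddChar α ℂ) (j : T) : EuclideanSpace ℂ V := toLp 2 ((ψ ∘ c) * ofLp (b j))
  let Q (ψ : AddChar α ℂ) : ℝ := ∑ j, re (inner ℂ (y ψ j) (toEuclideanLin M (y ψ j)))
  have hQ_one : Q 1 = ∑ j ∈ T, μ j := by
    rw [← sum_coe_sort T]
    refine sum_congr rfl fun j _ => ?_
    simp [y, hb]
  have hQ_ge (ψ : AddChar α ℂ) : ∑ j ∈ S, μ j ≤ Q ψ :=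
    LinearMap.IsSymmetric.sum_le_sum_re_inner_map_self (isSymmetric_toEuclideanLin_iff.mpr hM)
      hb (orthonormal_toLp_mul hx fun v => ψ.norm_apply (c v)) (by simp [hTS]) hSt htS
  have hQ_sum : ∑ ψ, Q ψ ≤ Fintype.card α * (#T * d) := by
    calc ∑ ψ, Q ψ = ∑ j : T, Fintype.card α *
          re (star (ofLp (b j)) ⬝ᵥ (pinching c M *ᵥ ofLp (b j))) := by
          simp only [Q, y, inner_toEuclideanLin]
          rw [sum_comm]
          refine sum_congr rfl fun j _ => ?_
          rw [← map_sum, sum_addChar_star_dotProduct_mulVec, ← ofReal_natCast, re_ofReal_mul]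
      _ ≤ ∑ j : T, Fintype.card α * d := by
          refine sum_le_sum fun j _ => mul_le_mul_of_nonneg_left ?_ (by positivity)
          have := re_star_dotProduct_mulVec_le hrow hcol (ofLp (b j))
          rwa [← EuclideanSpace.norm_sq_eq, b.norm_eq_one, one_pow, mul_one] at this
      _ = Fintype.card α * (#T * d) := by simp; ring
  have hrest : (Fintype.card α - 1) * ∑ j ∈ S, μ j ≤ ∑ ψ ∈ univ.erase 1, Q ψ := by
    have := card_nsmul_le_sum (univ.erase 1) Q _ fun ψ _ => hQ_ge ψ
    rwa [card_erase_of_mem (mem_univ _), card_univ, AddChar.card_eq, nsmul_eq_mul,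
      Nat.cast_pred Fintype.card_pos] at this
  linarith [add_sum_erase univ Q (mem_univ 1)]

end Matrix

namespace ImproperPaper

variable {V : Type*} [Fintype V] {G : SimpleGraph V} {d : ℕ}

theorem exists_isImproperColoring_improperChromaticNumber (G : SimpleGraph V) (d : ℕ) :
    ∃ c : V → Fin (improperChromaticNumber G d), IsImproperColoring G d c := by
  refine Nat.sInf_mem (s := {k | ∃ c : V → Fin k, IsImproperColoring G d c})
    ⟨Fintype.card V, Fintype.equivFin V, fun v => ?_⟩
  have : {w | G.Adj v w ∧ w = v} = ∅ := by
    ext w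
    simp only [Set.mem_ofPred_eq, Set.mem_empty_iff_false, iff_false, not_and]
    rintro h rfl
    exact G.irrefl h
  simp [this]

theorem IsImproperColoring.sum_norm_pinching_adjMatrix_le [DecidableRel G.Adj] {α : Type*}
    [DecidableEq α] {c : V → α} (hc : IsImproperColoring G d c) (v : V) :
    ∑ w, ‖pinching c (G.adjMatrix ℂ) v w‖ ≤ d := by
  classical
  have hset : {w | G.Adj v w ∧ c w = c v} = ↑({w | G.Adj v w ∧ c v = c w} : Finset V) := by
    ext w
    simp [eq_comm]
  have := hc v
  rw [hset, Set.ncard_coe_finset] at this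
  calc ∑ w, ‖pinching c (G.adjMatrix ℂ) v w‖ = #{w | G.Adj v w ∧ c v = c w} := by
        rw [card_filter, Nat.cast_sum]
        refine sum_congr rfl fun w _ => ?_
        by_cases h₁ : c v = c w <;> by_cases h₂ : G.Adj v w <;> simp [pinching, h₁, h₂]
    _ ≤ d := by exact_mod_cast this

theorem IsEigList.exists_sum_eq_sum_eigenvalues {n m : ℕ} {A : Matrix (Fin n) (Fin n) ℝ}
    {hA : A.IsHermitian} {lam : Fin n → ℝ} (hlam : IsEigList hA lam) (hm : 0 < m) (hmn : m ≤ n) :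
    ∃ T S : Finset (Fin n), #T = m ∧ #S = m ∧
      ∑ i ∈ univ.filter (fun i : Fin n => (i : ℕ) < m), lam i = ∑ j ∈ T, hA.eigenvalues j ∧
      ∑ i ∈ univ.filter (fun i : Fin n => n - m ≤ (i : ℕ)), lam i = ∑ j ∈ S, hA.eigenvalues j ∧
      ∃ t, (∀ j ∈ S, hA.eigenvalues j ≤ t) ∧ ∀ j ∉ S, t ≤ hA.eigenvalues j := by
  obtain ⟨hanti, σ, rfl⟩ := hlam
  have hS : #({i | n - m ≤ (i : ℕ)} : Finset (Fin n)) = m := by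
    have := card_filter_add_card_filter_not (s := univ) (fun i : Fin n => (i : ℕ) < n - m)
    simp only [Fin.card_filter_val_lt, not_lt, card_univ, Fintype.card_fin] at this
    omega
  refine ⟨({i | (i : ℕ) < m} : Finset (Fin n)).map σ.toEmbedding,
    ({i | n - m ≤ (i : ℕ)} : Finset (Fin n)).map σ.toEmbedding,
    by simp [Fin.card_filter_val_lt, hmn], by rw [card_map, hS], by rw [sum_map]; rfl,
    by rw [sum_map]; rfl, hA.eigenvalues (σ ⟨n - m, by omega⟩), fun j hj => ?_, fun j hj => ?_⟩
  · rw [mem_map_equiv, mem_filter] at hj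
    simpa using hanti (show (⟨n - m, by omega⟩ : Fin n) ≤ σ.symm j from hj.2)
  · rw [mem_map_equiv, mem_filter, not_and, not_le] at hj
    simpa using hanti (show σ.symm j ≤ (⟨n - m, by omega⟩ : Fin n) from (hj (mem_univ _)).le)

end ImproperPaper

open ImproperPaper in

theorem stmt_13 {n : ℕ} (G : SimpleGraph (Fin n)) [DecidableRel G.Adj] (d m : ℕ)
    (hd : 0 < d) (hm : 0 < m) (hmn : m ≤ n)
    (hA : (G.adjMatrix ℝ).IsHermitian) (lam : Fin n → ℝ) (hlam : IsEigList hA lam) :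
    1 + (-(d * m : ℝ) + ∑ i ∈ Finset.univ.filter (fun i : Fin n => (i : ℕ) < m), lam i) /
        ((d * m : ℝ) - ∑ i ∈ Finset.univ.filter (fun i : Fin n => n - m ≤ (i : ℕ)), lam i) ≤
      (improperChromaticNumber G d : ℝ) := by
  obtain ⟨T, S, hTm, hSm, hTsum, hSsum, t, hSt, htS⟩ := hlam.exists_sum_eq_sum_eigenvalues hm hmn
  obtain ⟨c, hc⟩ := exists_isImproperColoring_improperChromaticNumber G d
  have : NeZero (improperChromaticNumber G d) := NeZero.of_pos (c ⟨0, by omega⟩).pos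
  have hAc : (G.adjMatrix ℂ).IsHermitian := G.isHermitian_adjMatrix ℂ
  have hμ : hAc.eigenvalues = hA.eigenvalues :=
    hA.eigenvalues_eq_of_map_eq hAc (by ext; simp [adjMatrix_apply, apply_ite])
  rw [← hμ] at hTsum hSsum hSt htS
  have hkey := hAc.sum_add_mul_sum_le_of_pinching c hc.sum_norm_pinching_adjMatrix_le
    (hTm.trans hSm.symm) hSt htS
  rw [Fintype.card_fin, hTm] at hkey
  have hbot : ∑ j ∈ S, hAc.eigenvalues j ≤ 0 := by
    simpa [adjMatrix_apply] using hAc.sum_eigenvalues_le_sum_re_diag hSt htS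
  have hdm : (0 : ℝ) < d * m := by positivity
  rw [hTsum, hSsum, ← le_sub_iff_add_le', div_le_iff₀ (by linarith)]
  linear_combination hkey
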